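/- Let G be a finite connected directed multigraph with boundary ∂ and weights (U_e). Let C be a cycle all of whose edges have weight 0, with C not through ∂, and suppose the nonzero weights are generic (no nontrivial integer combination vanishes). If T' is the minimal spanning arborescence of the contracted graph (G',∂) = Ψ_contr((G,∂),C) (with the induced weights), then T = Ψ_ucontr((G,∂),(G',∂),C,T') is the minimal spanning arborescence of (G,∂). -/

import Mathlib

/-!
The uncontraction `T = (C \ {eC}) ∪ T'` is an arborescence: `T'` has exactly one edge `f`
leaving the contracted vertex, and `C \ {eC}` gives every other cycle vertex exactly one
out-edge and leads it to `tail f`; so paths of `T'` lift to paths of `T`, every vertex reaches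
`bd`, and with unique out-edges this rules out cycles.

For minimality, an arborescence `S` of `G` contracts to an arborescence `S'` of `G'`: keep the
`S`-edges leaving vertices outside `C`, plus the last edge of `S` that leaves `C` on the way to
`bd`. Weights are nonnegative and the cycle edges weigh nothing, hence
`w(T) = w(T') ≤ w(S') ≤ w(S)`.
-/

open scoped Classical

/-- A directed multigraph on vertex type `V` with oriented-edge type `E`. -/
structure DirMultigraph (V : Type*) (E : Type*) where
  tail : E → V
  head : E → V

namespace DirMultigraph

variable {V E : Type*} (G : DirMultigraph V E)

/-- `G` has no self-loops. -/
def NoSelfLoops : Prop := ∀ e : E, G.tail e ≠ G.head e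

/-- `G` is connected as an undirected multigraph. -/
def Connected : Prop :=
  ∀ u v : V, Relation.ReflTransGen
    (fun a b => ∃ e : E, (G.tail e = a ∧ G.head e = b) ∨ (G.tail e = b ∧ G.head e = a)) u v

/-- The set of edges `S` contains a directed cycle (a nonempty cyclically indexed family of
pairwise distinct edges, the head of each being the tail of the next). -/
def HasCycleIn (S : Set E) : Prop :=
  ∃ (n : ℕ) (c : ZMod n → E), 0 < n ∧ Function.Injective c ∧
    (∀ i, c i ∈ S) ∧ ∀ i, G.head (c i) = G.tail (c (i + 1))

/-- `S` is a spanning arborescence of `(G, bd)`: every vertex other than the boundary `bd`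
has exactly one outgoing edge in `S`, the boundary has none, and there are no directed
cycles. -/
def IsArborescence (bd : V) (S : Set E) : Prop :=
  (∀ v : V, v ≠ bd → ∃! e, e ∈ S ∧ G.tail e = v) ∧
  (∀ e ∈ S, G.tail e ≠ bd) ∧ ¬ G.HasCycleIn S

/-- `C` is the edge set of a (vertex-)simple directed cycle. -/
def IsCycleSet (C : Set E) : Prop :=
  ∃ (n : ℕ) (c : ZMod n → E), 0 < n ∧ Function.Injective c ∧
    Function.Injective (fun i => G.tail (c i)) ∧
    (∀ i, G.head (c i) = G.tail (c (i + 1))) ∧ Set.range c = C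

/-- The set of vertices that are endpoints of edges in `S`. -/
def verts (S : Set E) : Set V := {v | ∃ e ∈ S, G.tail e = v ∨ G.head e = v}

/-- The edges surviving the contraction of the vertex set `A`: those not having both
endpoints in `A`. -/
abbrev ContractedE (A : Set V) : Type _ := {e : E // G.tail e ∉ A ∨ G.head e ∉ A}

/-- Contraction of the vertex set `A` into a single new vertex (`none`): edges with both
endpoints in `A` (which would become self-loops) are deleted, and edges with exactly one
endpoint in `A` are redirected to the new vertex `none`; vertices outside `A` are kept. -/
noncomputable def contract (A : Set V) : DirMultigraph (Option {v : V // v ∉ A}) (G.ContractedE A) where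
  tail e := if h : G.tail e.1 ∈ A then none else some ⟨G.tail e.1, h⟩
  head e := if h : G.head e.1 ∈ A then none else some ⟨G.head e.1, h⟩

/-- The weights `w` are generic: no nontrivial integer combination of the nonzero weights
vanishes. -/
def Generic (w : E → ℝ) : Prop :=
  ∀ (s : Finset E) (n : E → ℤ), (∀ e ∈ s, w e ≠ 0) → (∃ e ∈ s, n e ≠ 0) →
    ∑ e ∈ s, (n e : ℝ) * w e ≠ 0

/-- The total weight of a set of edges. -/
noncomputable def wsum [Fintype E] (w : E → ℝ) (S : Set E) : ℝ :=
  ∑ e : E, S.indicator w e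

/-- `T` is a minimal spanning arborescence of `(G, bd)` for the weights `w`. -/
def IsMSA [Fintype E] (bd : V) (w : E → ℝ) (T : Set E) : Prop :=
  G.IsArborescence bd T ∧
    ∀ T' : Set E, G.IsArborescence bd T' → wsum w T ≤ wsum w T'

end DirMultigraph

theorem Function.exists_iterate_mem_periodicPts {α : Type*} [Finite α] (f : α → α) (x : α) :
    ∃ m, f^[m] x ∈ Function.periodicPts f := by
  obtain ⟨a, b, hab, heq⟩ := Finite.exists_ne_map_eq_of_infinite (f^[·] x)
  wlog hlt : a < b generalizing a b
  · exact this b a hab.symm heq.symm (by omega)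
  refine ⟨a, Function.mk_mem_periodicPts (n := b - a) (by omega) ?_⟩
  simp only [Function.IsPeriodicPt, Function.IsFixedPt, ← Function.iterate_add_apply]
  rw [Nat.sub_add_cancel hlt.le]
  exact heq.symm

namespace DirMultigraph

open Relation

variable {V E : Type*} (G : DirMultigraph V E)

def Step (S : Set E) (a b : V) : Prop := ∃ e ∈ S, G.tail e = a ∧ G.head e = b

variable {G}

lemma reach_mono {S S' : Set E} (h : S ⊆ S') {a b : V}
    (hab : ReflTransGen (G.Step S) a b) : ReflTransGen (G.Step S') a b :=
  ReflTransGen.mono (fun _ _ ⟨e, he, hta, hhb⟩ => ⟨e, h he, hta, hhb⟩) _ _ hab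

lemma not_hasCycleIn_of_reach {bd : V} {S : Set E} (hinj : Set.InjOn G.tail S)
    (hbd : ∀ e ∈ S, G.tail e ≠ bd) (hreach : ∀ v, ReflTransGen (G.Step S) v bd) :
    ¬ G.HasCycleIn S := by
  rintro ⟨n, c, -, -, hmem, hhd⟩
  -- a cycle vertex has only cycle edges leaving it, so it can never reach `bd`
  have key : ∀ v, ReflTransGen (G.Step S) v bd → ∀ i, G.tail (c i) ≠ v := by
    intro v hv
    induction hv using ReflTransGen.head_induction_on with
    | refl => exact fun i => hbd _ (hmem i)
    | head hstep _ ih =>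
      obtain ⟨e, he, rfl, rfl⟩ := hstep
      intro i hi
      have : c i = e := hinj (hmem i) he hi
      exact ih (i + 1) (by rw [← hhd i, this])
  exact key _ (hreach (G.tail (c 0))) 0 rfl

lemma isArborescence_of_reach {bd : V} {S : Set E} (hinj : Set.InjOn G.tail S)
    (hbd : ∀ e ∈ S, G.tail e ≠ bd) (hreach : ∀ v, ReflTransGen (G.Step S) v bd) :
    G.IsArborescence bd S := by
  refine ⟨fun v hv => ?_, hbd, not_hasCycleIn_of_reach hinj hbd hreach⟩
  obtain rfl | ⟨_, ⟨e, he, rfl, -⟩, -⟩ := (hreach v).cases_head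
  · exact absurd rfl hv
  · exact ⟨e, ⟨he, rfl⟩, fun e' he' => hinj he'.1 he he'.2⟩

lemma IsArborescence.injOn_tail {bd : V} {S : Set E} (h : G.IsArborescence bd S) :
    Set.InjOn G.tail S := by
  intro e he e' he' hee'
  obtain ⟨u, -, hu⟩ := h.1 _ (h.2.1 e he)
  exact (hu e ⟨he, rfl⟩).trans (hu e' ⟨he', hee'.symm⟩).symm

/-- Following the chosen out-edges from a vertex of `s` eventually runs around a periodic
orbit, whose out-edges form the cycle. -/
lemma hasCycleIn_of_forall_exists_step [Finite V] {S : Set E} {s : Set V} (hs : s.Nonempty)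
    (hstep : ∀ v ∈ s, ∃ e ∈ S, G.tail e = v ∧ G.head e ∈ s) : G.HasCycleIn S := by
  obtain ⟨x, hx⟩ := hs
  have : Nonempty E := ⟨(hstep x hx).choose⟩
  choose! out hout using hstep
  set g : V → V := fun v => G.head (out v)
  have hg : Set.MapsTo g s s := fun v hv => (hout v hv).2.2
  obtain ⟨m, hper⟩ := Function.exists_iterate_mem_periodicPts g x
  set y := g^[m] x
  set p := Function.minimalPeriod g y
  have hp : 0 < p := Function.minimalPeriod_pos_of_mem_periodicPts hper
  have : NeZero p := ⟨hp.ne'⟩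
  have hys : ∀ k, g^[k] y ∈ s := fun k => by
    rw [← Function.iterate_add_apply]; exact hg.iterate (k + m) hx
  refine ⟨p, fun k => out (g^[k.val] y), hp, fun k k' hkk' => ?_, fun k => (hout _ (hys _)).1,
    fun k => ?_⟩
  · have htail := congrArg G.tail hkk'
    simp only [(hout _ (hys _)).2.1] at htail
    exact ZMod.val_injective p (Function.iterate_injOn_Iio_minimalPeriod
      (ZMod.val_lt k) (ZMod.val_lt k') htail)
  · have hsucc : (k + 1).val = (k.val + 1) % p := by
      rw [← ZMod.val_natCast, Nat.cast_add, ZMod.natCast_zmod_val, Nat.cast_one]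
    rw [(hout _ (hys _)).2.1, hsucc, Function.iterate_mod_minimalPeriod_eq,
      Function.iterate_succ_apply']

lemma IsArborescence.reach [Finite V] {bd : V} {S : Set E} (h : G.IsArborescence bd S) (v : V) :
    ReflTransGen (G.Step S) v bd := by
  by_contra hv
  refine h.2.2 (hasCycleIn_of_forall_exists_step
    (s := {u | ¬ ReflTransGen (G.Step S) u bd}) ⟨v, hv⟩ fun u hu => ?_)
  have hubd : u ≠ bd := by rintro rfl; exact hu .refl
  obtain ⟨e, ⟨he, rfl⟩, -⟩ := h.1 u hubd
  exact ⟨e, he, rfl, fun hr => hu (hr.head ⟨e, he, rfl, rfl⟩)⟩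

lemma reach_tail_of_injective_cyclic {n : ℕ} [NeZero n] {c : ZMod n → E}
    (hc : Function.Injective c) (hhd : ∀ i, G.head (c i) = G.tail (c (i + 1))) (i₀ i : ZMod n) :
    ReflTransGen (G.Step (Set.range c \ {c i₀})) (G.tail (c i)) (G.tail (c i₀)) := by
  suffices h : ∀ k < n, ReflTransGen (G.Step (Set.range c \ {c i₀}))
      (G.tail (c (i₀ - k))) (G.tail (c i₀)) by
    simpa using h _ (ZMod.val_lt (i₀ - i))
  intro k hk
  induction k with
  | zero => simpa using .refl
  | succ k ih =>
    have hne : c (i₀ - ↑(k + 1)) ≠ c i₀ := fun h => by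
      have := congrArg (i₀ - ·) (hc h)
      simp only [sub_sub_cancel, sub_self, ZMod.natCast_eq_zero_iff] at this
      exact absurd (Nat.le_of_dvd k.succ_pos this) (by omega)
    refine .head ⟨_, ⟨Set.mem_range_self _, hne⟩, rfl, ?_⟩ (ih (by omega))
    rw [hhd]; congr 2; push_cast; ring

lemma IsCycleSet.injOn_tail {C : Set E} (hC : G.IsCycleSet C) : Set.InjOn G.tail C := by
  obtain ⟨n, c, -, -, htinj, -, rfl⟩ := hC
  rintro _ ⟨i, rfl⟩ _ ⟨j, rfl⟩ hij
  exact congrArg c (htinj hij)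

lemma IsCycleSet.nonempty_verts {C : Set E} (hC : G.IsCycleSet C) : (G.verts C).Nonempty := by
  obtain ⟨n, c, -, -, -, -, rfl⟩ := hC
  exact ⟨_, c 0, Set.mem_range_self 0, Or.inl rfl⟩

lemma IsCycleSet.reach_diff_singleton {C : Set E} (hC : G.IsCycleSet C) {e₀ : E}
    (he₀ : e₀ ∈ C) {v : V} (hv : v ∈ G.verts C) :
    ReflTransGen (G.Step (C \ {e₀})) v (G.tail e₀) := by
  obtain ⟨n, c, hn, hc, -, hhd, rfl⟩ := hC
  have : NeZero n := ⟨hn.ne'⟩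
  obtain ⟨i₀, rfl⟩ := he₀
  obtain ⟨_, ⟨i, rfl⟩, rfl | rfl⟩ := hv
  · exact reach_tail_of_injective_cyclic hc hhd i₀ i
  · rw [hhd]; exact reach_tail_of_injective_cyclic hc hhd i₀ (i + 1)

section Contraction

variable {A : Set V}

variable (A) in
noncomputable def contractVertex (v : V) : Option {v : V // v ∉ A} :=
  if h : v ∈ A then none else some ⟨v, h⟩

lemma contract_tail (e : G.ContractedE A) :
    (G.contract A).tail e = contractVertex A (G.tail e.1) := rfl

lemma contractVertex_eq_none {v : V} : contractVertex A v = none ↔ v ∈ A := by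
  unfold contractVertex; split_ifs with h <;> simp [h]

lemma contractVertex_of_notMem {v : V} (hv : v ∉ A) : contractVertex A v = some ⟨v, hv⟩ :=
  dif_neg hv

lemma eq_of_contractVertex_eq {u v : V} (hv : v ∉ A)
    (huv : contractVertex A u = contractVertex A v) : u = v := by
  rw [contractVertex_of_notMem hv] at huv
  unfold contractVertex at huv
  split_ifs at huv
  simpa using huv

lemma reach_contract {S : Set E} {S' : Set (G.ContractedE A)}
    (hS : ∀ e ∈ S, ∀ h : G.tail e ∉ A, (⟨e, Or.inl h⟩ : G.ContractedE A) ∈ S') {b : V}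
    (hnone : (∃ e ∈ S, G.tail e ∈ A) →
      ReflTransGen ((G.contract A).Step S') none (contractVertex A b))
    {u : V} (hu : ReflTransGen (G.Step S) u b) :
    ReflTransGen ((G.contract A).Step S') (contractVertex A u) (contractVertex A b) := by
  induction hu using ReflTransGen.head_induction_on with
  | refl => exact .refl
  | head hstep _ ih =>
    obtain ⟨e, he, rfl, rfl⟩ := hstep
    by_cases h : G.tail e ∈ A
    · rw [contractVertex_eq_none.2 h]; exact hnone ⟨e, he, h⟩
    · exact .head ⟨⟨e, Or.inl h⟩, hS e he h, rfl, rfl⟩ ih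

lemma reach_of_reach_contract {T : Set E} {T' : Set (G.ContractedE A)}
    (hT : Subtype.val '' T' ⊆ T)
    (hA : ∀ e' ∈ T', ∀ v ∈ A, G.tail e'.1 ∈ A → ReflTransGen (G.Step T) v (G.tail e'.1))
    {b : V} (hb : b ∉ A) {v : V}
    (hv : ReflTransGen ((G.contract A).Step T') (contractVertex A v) (contractVertex A b)) :
    ReflTransGen (G.Step T) v b := by
  generalize hx : contractVertex A v = x at hv
  induction hv using ReflTransGen.head_induction_on generalizing v with
  | refl => exact (eq_of_contractVertex_eq hb hx).symm ▸ .refl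
  | head hstep _ ih =>
    obtain ⟨e', he', htail, rfl⟩ := hstep
    rw [contract_tail, ← hx] at htail
    have hv_tail : ReflTransGen (G.Step T) v (G.tail e'.1) := by
      by_cases hvA : v ∈ A
      · exact hA e' he' v hvA
          (contractVertex_eq_none.1 (htail.trans (contractVertex_eq_none.2 hvA)))
      · exact eq_of_contractVertex_eq hvA htail ▸ .refl
    exact hv_tail.trans (.head ⟨e'.1, hT ⟨e', he', rfl⟩, rfl, rfl⟩ (ih rfl))

lemma notMem_of_reach_outside {S : Set E} {u b : V} (hb : b ∉ A)
    (hu : ReflTransGen (G.Step {e ∈ S | G.tail e ∉ A}) u b) : u ∉ A := by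
  obtain rfl | ⟨_, ⟨e, ⟨-, he⟩, rfl, -⟩, -⟩ := hu.cases_head
  exacts [hb, he]

lemma exists_exit_edge {S : Set E} {a b : V} (ha : a ∈ A) (hb : b ∉ A)
    (hab : ReflTransGen (G.Step S) a b) :
    ∃ e ∈ S, G.tail e ∈ A ∧ G.head e ∉ A ∧
      ReflTransGen (G.Step {e ∈ S | G.tail e ∉ A}) (G.head e) b := by
  suffices h : ∀ u, ReflTransGen (G.Step S) u b →
      ReflTransGen (G.Step {e ∈ S | G.tail e ∉ A}) u b ∨
        ∃ e ∈ S, G.tail e ∈ A ∧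
          ReflTransGen (G.Step {e ∈ S | G.tail e ∉ A}) (G.head e) b by
    obtain hout | ⟨e, he, heA, hreach⟩ := h a hab
    · exact absurd ha (notMem_of_reach_outside hb hout)
    · exact ⟨e, he, heA, notMem_of_reach_outside hb hreach, hreach⟩
  intro u hu
  induction hu using ReflTransGen.head_induction_on with
  | refl => exact Or.inl .refl
  | head hstep _ ih =>
    obtain ⟨e, he, rfl, rfl⟩ := hstep
    refine ih.elim (fun hreach => ?_) Or.inr
    by_cases heA : G.tail e ∈ A
    · exact Or.inr ⟨e, he, heA, hreach⟩
    · exact Or.inl (.head ⟨e, ⟨he, heA⟩, rfl, rfl⟩ hreach)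

/-- Contracting `A`: keep the edges of `S` leaving vertices outside `A`, together with the
last edge of `S` leaving `A` on the way to `bd`. -/
lemma IsArborescence.exists_contract [Finite V] {bd : V} {S : Set E}
    (hS : G.IsArborescence bd S) (hbd : bd ∉ A) (hA : A.Nonempty) :
    ∃ S' : Set (G.ContractedE A), (G.contract A).IsArborescence (some ⟨bd, hbd⟩) S' ∧
      Subtype.val '' S' ⊆ S := by
  obtain ⟨a, ha⟩ := hA
  obtain ⟨es, hesS, hes_tail, hes_head, hes_reach⟩ := exists_exit_edge ha hbd (hS.reach a)
  set S' : Set (G.ContractedE A) := {e' | e'.1 ∈ S ∧ (G.tail e'.1 ∈ A → e'.1 = es)}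
  have hroot : some ⟨bd, hbd⟩ = contractVertex A bd := (contractVertex_of_notMem hbd).symm
  have hnone : ReflTransGen ((G.contract A).Step S') none (contractVertex A bd) := by
    refine .head ⟨⟨es, Or.inr hes_head⟩, ⟨hesS, fun _ => rfl⟩,
      contractVertex_eq_none.2 hes_tail, rfl⟩ ?_
    exact reach_contract (S' := S') (fun e he h => ⟨he.1, fun h' => absurd h' h⟩)
      (fun ⟨e, he, heA⟩ => absurd heA he.2) hes_reach
  refine ⟨S', isArborescence_of_reach ?_ ?_ fun x => ?_,
    fun _ ⟨e', he', he⟩ => he ▸ he'.1⟩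
  · intro e₁ he₁ e₂ he₂ h
    simp only [contract_tail] at h
    by_cases h₁ : G.tail e₁.1 ∈ A
    · have h₂ : G.tail e₂.1 ∈ A :=
        contractVertex_eq_none.1 (h ▸ contractVertex_eq_none.2 h₁)
      exact Subtype.ext ((he₁.2 h₁).trans (he₂.2 h₂).symm)
    · exact Subtype.ext (hS.injOn_tail he₁.1 he₂.1 (eq_of_contractVertex_eq h₁ h.symm).symm)
  · intro e' he' h
    rw [contract_tail, hroot] at h
    exact hS.2.1 _ he'.1 (eq_of_contractVertex_eq hbd h)
  · rw [hroot]
    obtain _ | ⟨v, hv⟩ := x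
    · exact hnone
    · rw [← contractVertex_of_notMem hv]
      exact reach_contract (S' := S') (fun e he h => ⟨he, fun h' => absurd h' h⟩)
        (fun _ => hnone) (hS.reach v)

lemma isArborescence_uncontract [Finite V] {bd : V} (hbd : bd ∉ A)
    {T' : Set (G.ContractedE A)} (hT' : (G.contract A).IsArborescence (some ⟨bd, hbd⟩) T')
    {f : G.ContractedE A} (hf : f ∈ T') (hfA : G.tail f.1 ∈ A) {P : Set E}
    (hPA : ∀ e ∈ P, G.tail e ∈ A) (hPinj : Set.InjOn G.tail P)
    (hPf : ∀ e ∈ P, G.tail e ≠ G.tail f.1)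
    (hPreach : ∀ v ∈ A, ReflTransGen (G.Step P) v (G.tail f.1)) :
    G.IsArborescence bd (P ∪ Subtype.val '' T') := by
  have hroot : some ⟨bd, hbd⟩ = contractVertex A bd := (contractVertex_of_notMem hbd).symm
  have hleave : ∀ e' ∈ T', G.tail e'.1 ∈ A → e' = f := fun e' he' h =>
    hT'.injOn_tail he' hf (by
      rw [contract_tail, contract_tail, contractVertex_eq_none.2 h, contractVertex_eq_none.2 hfA])
  refine isArborescence_of_reach ?_ ?_ fun v => ?_
  · rintro e₁ (h₁ | ⟨e₁, h₁, rfl⟩) e₂ (h₂ | ⟨e₂, h₂, rfl⟩) h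
    · exact hPinj h₁ h₂ h
    · exact absurd (hleave e₂ h₂ (h ▸ hPA e₁ h₁) ▸ h) (hPf e₁ h₁)
    · exact absurd (hleave e₁ h₁ (h ▸ hPA e₂ h₂) ▸ h.symm) (hPf e₂ h₂)
    · exact congrArg Subtype.val (hT'.injOn_tail h₁ h₂ (congrArg (contractVertex A) h))
  · rintro e (he | ⟨e', he', rfl⟩) h
    · exact hbd (h ▸ hPA e he)
    · exact hT'.2.1 e' he' (by rw [contract_tail, h, hroot])
  · refine reach_of_reach_contract Set.subset_union_right (fun e' he' u hu h => ?_) hbd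
      (hroot ▸ hT'.reach _)
    exact hleave e' he' h ▸ reach_mono Set.subset_union_left (hPreach u hu)

end Contraction

section Weight

variable [Fintype E] {w : E → ℝ}

lemma wsum_mono (hw : ∀ e, 0 ≤ w e) {S S' : Set E} (h : S ⊆ S') : wsum w S ≤ wsum w S' :=
  Finset.sum_le_sum fun e _ => Set.indicator_le_indicator_of_subset h (fun e => hw e) e

lemma wsum_union_of_forall_eq_zero {S Z : Set E} (hZ : ∀ e ∈ Z, w e = 0) :
    wsum w (Z ∪ S) = wsum w S := by
  refine Finset.sum_congr rfl fun e _ => ?_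
  by_cases he : e ∈ Z
  · simp [Set.indicator_apply, hZ e he]
  · simp [Set.indicator_apply, he]

lemma wsum_subtype {p : E → Prop} [Fintype (Subtype p)] (w : E → ℝ) (S : Set (Subtype p)) :
    wsum (fun e : Subtype p => w e.1) S = wsum w (Subtype.val '' S) := by
  refine Fintype.sum_of_injective _ Subtype.val_injective _ _ ?_ fun e => ?_
  · refine fun e he => Set.indicator_of_notMem ?_ w
    rintro ⟨e', -, rfl⟩
    exact he ⟨e', rfl⟩
  · simp [Set.indicator_apply, Subtype.val_injective.mem_set_image]

end Weight

end DirMultigraph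

open DirMultigraph

theorem stmt_7_general {V E : Type} [Fintype V] [Fintype E] (G : DirMultigraph V E)
    (bd : V)
    (w : E → ℝ) (hw0 : ∀ e, 0 ≤ w e)
    (C : Set E) (hC : G.IsCycleSet C) (hCw : ∀ e ∈ C, w e = 0) (hbd : bd ∉ G.verts C)
    (T' : Set (G.ContractedE (G.verts C)))
    (hT' : (G.contract (G.verts C)).IsMSA (some ⟨bd, hbd⟩) (fun e => w e.1) T')
    (f : G.ContractedE (G.verts C)) (hfT : f ∈ T') (hf : G.tail f.1 ∈ G.verts C)
    (eC : E) (heC : eC ∈ C) (heCf : G.tail eC = G.tail f.1) :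
    G.IsMSA bd w ((C ∪ (Subtype.val '' T')) \ {eC}) := by
  have hvert : ∀ e ∈ C, G.tail e ∈ G.verts C ∧ G.head e ∈ G.verts C :=
    fun e he => ⟨⟨e, he, Or.inl rfl⟩, ⟨e, he, Or.inr rfl⟩⟩
  have hT'C : eC ∉ Subtype.val '' T' := fun ⟨e', _, he'⟩ =>
    e'.2.elim (· (he' ▸ hvert eC heC).1) (· (he' ▸ hvert eC heC).2)
  rw [Set.union_sdiff_distrib, Set.sdiff_singleton_eq_self hT'C]
  refine ⟨isArborescence_uncontract hbd hT'.1 hfT hf (fun e he => (hvert e he.1).1)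
    (hC.injOn_tail.mono Set.sdiff_subset)
    (fun e he h => he.2 (hC.injOn_tail he.1 heC (h.trans heCf.symm)))
    (fun v hv => heCf ▸ hC.reach_diff_singleton heC hv), fun S hS => ?_⟩
  obtain ⟨S', hS', hS'S⟩ := hS.exists_contract hbd hC.nonempty_verts
  calc wsum w (C \ {eC} ∪ Subtype.val '' T')
      ≤ wsum w (C ∪ Subtype.val '' T') :=
        wsum_mono hw0 (Set.union_subset_union_left _ Set.sdiff_subset)
    _ = wsum (fun e => w e.1) T' := by rw [wsum_union_of_forall_eq_zero hCw, wsum_subtype]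
    _ ≤ wsum (fun e => w e.1) S' := hT'.2 S' hS'
    _ = wsum w (Subtype.val '' S') := wsum_subtype w S'
    _ ≤ wsum w S := wsum_mono hw0 hS'S

/-- Let `G` be a finite connected directed multigraph with boundary `bd` and
nonnegative weights `w`.  Let `C` be a directed cycle all of whose edges have weight `0`,
not passing through `bd`, and suppose the weights are generic (no nontrivial integer
combination of the nonzero weights vanishes).  If `T'` is the minimal spanning arborescence
of the contracted graph `(G', bd) = Ψ_contr((G, bd), C)` with the induced weights, then the
uncontraction `T = Ψ_ucontr((G, bd), (G', bd), C, T')` — the union of the edges of `C` with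
the edges of `T'` minus the edge `eC` of `C` leaving the same vertex as the `T'`-edge `f`
outgoing from the contracted vertex — is the minimal spanning arborescence of `(G, bd)`. -/
theorem stmt_7 {V E : Type} [Fintype V] [Fintype E] (G : DirMultigraph V E)
    (hloop : G.NoSelfLoops) (hconn : G.Connected) (bd : V)
    (w : E → ℝ) (hw0 : ∀ e, 0 ≤ w e) (hgen : Generic w)
    (C : Set E) (hC : G.IsCycleSet C) (hCw : ∀ e ∈ C, w e = 0) (hbd : bd ∉ G.verts C)
    (T' : Set (G.ContractedE (G.verts C)))
    (hT' : (G.contract (G.verts C)).IsMSA (some ⟨bd, hbd⟩) (fun e => w e.1) T')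
    (f : G.ContractedE (G.verts C)) (hfT : f ∈ T') (hf : G.tail f.1 ∈ G.verts C)
    (eC : E) (heC : eC ∈ C) (heCf : G.tail eC = G.tail f.1) :
    G.IsMSA bd w ((C ∪ (Subtype.val '' T')) \ {eC}) :=
  stmt_7_general G bd w hw0 C hC hCw hbd T' hT' f hfT hf eC heC heCf
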